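/- The elements of the Weyl group orbit W·Λ₁ whose δ-coordinate is −½ are exactly the 128 type II vectors ½(2, −1; ±1, …, ±1) having an even number of minus signs among the last eight coordinates. -/

import Mathlib

noncomputable section
open scoped Classical

/-- The ambient space `ℝ^10` with ordered basis `(ε₀, δ, ε₁, …, ε₈)`:
index `0` is the `ε₀`-coordinate, index `1` is the `δ`-coordinate, and
indices `2,…,9` are the coordinates along `ε₁,…,ε₈`. -/
abbrev E9 : Type := Fin 10 → ℝ

/-- The symmetric bilinear form: `⟨εᵢ,εⱼ⟩ = δᵢⱼ` (1 ≤ i,j ≤ 8), `⟨δ,ε₀⟩ = ⟨ε₀,δ⟩ = 1`,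
all other pairings of basis vectors zero. -/
def B (x y : E9) : ℝ :=
  x 0 * y 1 + x 1 * y 0 + x 2 * y 2 + x 3 * y 3 + x 4 * y 4 + x 5 * y 5 +
    x 6 * y 6 + x 7 * y 7 + x 8 * y 8 + x 9 * y 9

/-- The basis vector `ε₀`. -/
def e0 : E9 := fun j => if (j : ℕ) = 0 then 1 else 0

/-- The null root `δ`. -/
def deltaV : E9 := fun j => if (j : ℕ) = 1 then 1 else 0

/-- The basis vectors `ε₁, …, ε₈`, indexed by `i : Fin 8` (so `epsV i = ε_{i+1}`). -/
def epsV (i : Fin 8) : E9 := fun j => if (j : ℕ) = (i : ℕ) + 2 then 1 else 0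

/-- The simple roots `α₀, α₁, …, α₈` of `E₉`:
`αᵢ = εᵢ - εᵢ₊₁` for `1 ≤ i ≤ 7`, `α₈ = ε₇ + ε₈`, and
`α₀ = ½(δ + ε₈ - Σ_{i=1}^{7} εᵢ)`. -/
def rootα : Fin 9 → E9
  | 0 => (1 / 2 : ℝ) • (deltaV + epsV 7
           - (epsV 0 + epsV 1 + epsV 2 + epsV 3 + epsV 4 + epsV 5 + epsV 6))
  | 1 => epsV 0 - epsV 1
  | 2 => epsV 1 - epsV 2
  | 3 => epsV 2 - epsV 3
  | 4 => epsV 3 - epsV 4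
  | 5 => epsV 4 - epsV 5
  | 6 => epsV 5 - epsV 6
  | 7 => epsV 6 - epsV 7
  | 8 => epsV 6 + epsV 7

lemma B_add_left (x y z : E9) : B (x + y) z = B x z + B y z := by
  simp [B, Pi.add_apply]; ring

lemma B_smul_left (c : ℝ) (x z : E9) : B (c • x) z = c * B x z := by
  simp [B, Pi.smul_apply, smul_eq_mul]; ring

lemma B_sub_left (x y z : E9) : B (x - y) z = B x z - B y z := by
  simp [B, Pi.sub_apply]; ring

/-- The simple reflection `sᵢ(ν) = ν - ⟨ν,αᵢ⟩αᵢ`, as a linear endomorphism of `ℝ^10`. -/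
def sLin (i : Fin 9) : E9 →ₗ[ℝ] E9 where
  toFun v := v - B v (rootα i) • rootα i
  map_add' v w := by
    simp only [B_add_left, add_smul]
    abel
  map_smul' c v := by
    simp only [B_smul_left, RingHom.id_apply, smul_sub, mul_smul]

lemma B_rootα_self (i : Fin 9) : B (rootα i) (rootα i) = 2 := by
  fin_cases i <;>
    norm_num [B, rootα, epsV, deltaV, Pi.add_apply, Pi.sub_apply, Pi.smul_apply, smul_eq_mul,
      show ((0 : Fin 10) : ℕ) = 0 from rfl, show ((1 : Fin 10) : ℕ) = 1 from rfl,
      show ((2 : Fin 10) : ℕ) = 2 from rfl, show ((3 : Fin 10) : ℕ) = 3 from rfl,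
      show ((4 : Fin 10) : ℕ) = 4 from rfl, show ((5 : Fin 10) : ℕ) = 5 from rfl,
      show ((6 : Fin 10) : ℕ) = 6 from rfl, show ((7 : Fin 10) : ℕ) = 7 from rfl,
      show ((8 : Fin 10) : ℕ) = 8 from rfl, show ((9 : Fin 10) : ℕ) = 9 from rfl,
      show ((0 : Fin 8) : ℕ) = 0 from rfl, show ((1 : Fin 8) : ℕ) = 1 from rfl,
      show ((2 : Fin 8) : ℕ) = 2 from rfl, show ((3 : Fin 8) : ℕ) = 3 from rfl,
      show ((4 : Fin 8) : ℕ) = 4 from rfl, show ((5 : Fin 8) : ℕ) = 5 from rfl,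
      show ((6 : Fin 8) : ℕ) = 6 from rfl, show ((7 : Fin 8) : ℕ) = 7 from rfl]

lemma sLin_apply (i : Fin 9) (v : E9) : sLin i v = v - B v (rootα i) • rootα i := rfl

lemma sLin_invol (i : Fin 9) : (sLin i).comp (sLin i) = LinearMap.id := by
  refine LinearMap.ext fun v => ?_
  show sLin i (sLin i v) = v
  rw [sLin_apply, sLin_apply, B_sub_left, B_smul_left, B_rootα_self]
  module

/-- The simple reflection `sᵢ` as an element of `GL(ℝ^10)`. -/
def sGL (i : Fin 9) : LinearMap.GeneralLinearGroup ℝ E9 where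
  val := sLin i
  inv := sLin i
  val_inv := by rw [Module.End.mul_eq_comp]; exact sLin_invol i
  inv_val := by rw [Module.End.mul_eq_comp]; exact sLin_invol i

/-- The Weyl group of `E₉`: the subgroup of `GL(ℝ^10)` generated by the nine
simple reflections `s₀, s₁, …, s₈`. -/
def W : Subgroup (LinearMap.GeneralLinearGroup ℝ E9) := Subgroup.closure (Set.range sGL)

/-- The fundamental weights `Λ₀, Λ₁, …, Λ₈`:
`Λᵢ = (i, 0; 1,…,1, 0,…,0)` (`i` ones) for `1 ≤ i ≤ 6`,
`Λ₇ = ½(8, 0; 1,1,1,1,1,1,1,-1)`, `Λ₈ = ½(6, 0; 1,…,1)`, `Λ₀ = (2, 0; 0,…,0)`. -/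
def Λw : Fin 9 → E9
  | 0 => (2 : ℝ) • e0
  | 1 => e0 + epsV 0
  | 2 => (2 : ℝ) • e0 + (epsV 0 + epsV 1)
  | 3 => (3 : ℝ) • e0 + (epsV 0 + epsV 1 + epsV 2)
  | 4 => (4 : ℝ) • e0 + (epsV 0 + epsV 1 + epsV 2 + epsV 3)
  | 5 => (5 : ℝ) • e0 + (epsV 0 + epsV 1 + epsV 2 + epsV 3 + epsV 4)
  | 6 => (6 : ℝ) • e0 + (epsV 0 + epsV 1 + epsV 2 + epsV 3 + epsV 4 + epsV 5)
  | 7 => (4 : ℝ) • e0 + (1 / 2 : ℝ) •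
          (epsV 0 + epsV 1 + epsV 2 + epsV 3 + epsV 4 + epsV 5 + epsV 6 - epsV 7)
  | 8 => (3 : ℝ) • e0 + (1 / 2 : ℝ) •
          (epsV 0 + epsV 1 + epsV 2 + epsV 3 + epsV 4 + epsV 5 + epsV 6 + epsV 7)

/-- The Weyl group orbit `W·Λ₁` of the fundamental weight `Λ₁ = (1,0;1,0,…,0)`. -/
def WeylOrbit : Set E9 := {v | ∃ g ∈ W, (g : E9 →ₗ[ℝ] E9) (Λw 1) = v}

/-- Type I straight weights: `(1, 0; ±εᵢ)`, `1 ≤ i ≤ 8`. -/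
def TypeI : Set E9 := {v | ∃ i : Fin 8, v = e0 + epsV i ∨ v = e0 - epsV i}

/-- Type II straight weights: `½(2, -1; ±1, …, ±1)` with an even number of minus
signs among the last eight coordinates. -/
def TypeII : Set E9 :=
  {v | ∃ s : Fin 8 → ℝ, (∀ i, s i = 1 ∨ s i = -1) ∧
    Even (Finset.univ.filter fun i => s i = -1).card ∧
    v = e0 - (1 / 2 : ℝ) • deltaV + (1 / 2 : ℝ) • ∑ i, s i • epsV i}

/-- Type III straight weights: `(1, -1; ν)` where `ν` is a permutation of
`(1,1,1,0,0,0,0,0)`. -/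
def TypeIII : Set E9 :=
  {v | ∃ σ : Equiv.Perm (Fin 8),
    v = e0 - deltaV + ∑ i, (if ((σ i : ℕ)) < 3 then (1 : ℝ) else 0) • epsV i}

/-- The set `Ω` of straight weights. -/
def Ω : Set E9 := TypeI ∪ TypeII ∪ TypeIII

/-- `k(λ) = -⟨λ, 2α̂₀⟩` where `α̂₀ = α₀ - ε₈`. -/
def kf (v : E9) : ℝ := -B v ((2 : ℝ) • (rootα 0 - epsV 7))

/-- `Δ(λ)`: `0` if `k(λ) ≤ 0` is even, `1/2` if `k(λ) ≤ 1` is odd, and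
`(k(λ) + 2[λ]₃)/6` if `k(λ) ≥ 1`, where `[λ]₃` is the least nonnegative residue
of `k(λ)` modulo 3. -/
def Δf (v : E9) : ℝ :=
  if kf v ≤ 0 ∧ (∃ m : ℤ, kf v = 2 * m) then 0
  else if kf v ≤ 1 ∧ (∃ m : ℤ, kf v = 2 * m + 1) then 1 / 2
  else (kf v + 2 * (kf v - 3 * ⌊kf v / 3⌋)) / 6

/-- A vector is a dominant weight if its pairing with every simple root is a
nonnegative integer. -/
def IsDominant (v : E9) : Prop := ∀ i : Fin 9, ∃ m : ℕ, B v (rootα i) = m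

/-- The set `P(Λ₁) = {ω - sδ : ω ∈ W·Λ₁, s ∈ ℕ}` of weights of `V = V_{Λ₁}`. -/
def PLam1 : Set E9 := {v | ∃ w ∈ WeylOrbit, ∃ s : ℕ, v = w - (s : ℝ) • deltaV}

/-- A dominant weight is initial if its `δ`-coordinate equals `-Δ` of it. -/
def IsInitial (v : E9) : Prop := IsDominant v ∧ v 1 = -Δf v


section myadd
@[simp] lemma c10_0 : ((0:Fin 10):ℕ) = 0 := rfl
@[simp] lemma c10_1 : ((1:Fin 10):ℕ) = 1 := rfl
@[simp] lemma c10_2 : ((2:Fin 10):ℕ) = 2 := rfl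
@[simp] lemma c10_3 : ((3:Fin 10):ℕ) = 3 := rfl
@[simp] lemma c10_4 : ((4:Fin 10):ℕ) = 4 := rfl
@[simp] lemma c10_5 : ((5:Fin 10):ℕ) = 5 := rfl
@[simp] lemma c10_6 : ((6:Fin 10):ℕ) = 6 := rfl
@[simp] lemma c10_7 : ((7:Fin 10):ℕ) = 7 := rfl
@[simp] lemma c10_8 : ((8:Fin 10):ℕ) = 8 := rfl
@[simp] lemma c10_9 : ((9:Fin 10):ℕ) = 9 := rfl
@[simp] lemma c8_0 : ((0:Fin 8):ℕ) = 0 := rfl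
@[simp] lemma c8_1 : ((1:Fin 8):ℕ) = 1 := rfl
@[simp] lemma c8_2 : ((2:Fin 8):ℕ) = 2 := rfl
@[simp] lemma c8_3 : ((3:Fin 8):ℕ) = 3 := rfl
@[simp] lemma c8_4 : ((4:Fin 8):ℕ) = 4 := rfl
@[simp] lemma c8_5 : ((5:Fin 8):ℕ) = 5 := rfl
@[simp] lemma c8_6 : ((6:Fin 8):ℕ) = 6 := rfl
@[simp] lemma c8_7 : ((7:Fin 8):ℕ) = 7 := rfl

lemma rα0 : rootα 0 = fun a => if a = 0 then 0 else if a = 1 then 1/2 else if a = 9 then 1/2 else -(1/2) := by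
  funext a; fin_cases a <;> simp [rootα, epsV, deltaV, Pi.sub_apply, Pi.add_apply, Pi.smul_apply]

lemma rα1 : rootα 1 = fun a => if a = 2 then 1 else if a = 3 then -1 else 0 := by
  funext a; fin_cases a <;> simp [rootα, epsV, Pi.sub_apply]

lemma rα2 : rootα 2 = fun a => if a = 3 then 1 else if a = 4 then -1 else 0 := by
  funext a; fin_cases a <;> simp [rootα, epsV, Pi.sub_apply]

lemma rα3 : rootα 3 = fun a => if a = 4 then 1 else if a = 5 then -1 else 0 := by
  funext a; fin_cases a <;> simp [rootα, epsV, Pi.sub_apply]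

lemma rα4 : rootα 4 = fun a => if a = 5 then 1 else if a = 6 then -1 else 0 := by
  funext a; fin_cases a <;> simp [rootα, epsV, Pi.sub_apply]

lemma rα5 : rootα 5 = fun a => if a = 6 then 1 else if a = 7 then -1 else 0 := by
  funext a; fin_cases a <;> simp [rootα, epsV, Pi.sub_apply]

lemma rα6 : rootα 6 = fun a => if a = 7 then 1 else if a = 8 then -1 else 0 := by
  funext a; fin_cases a <;> simp [rootα, epsV, Pi.sub_apply]

lemma rα7 : rootα 7 = fun a => if a = 8 then 1 else if a = 9 then -1 else 0 := by
  funext a; fin_cases a <;> simp [rootα, epsV, Pi.sub_apply]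

lemma rα8 : rootα 8 = fun a => if a = 8 then 1 else if a = 9 then 1 else 0 := by
  funext a; fin_cases a <;> simp [rootα, epsV, Pi.add_apply]

lemma Bα0 (v : E9) : B v (rootα 0) = (v 0 - v 2 - v 3 - v 4 - v 5 - v 6 - v 7 - v 8 + v 9)/2 := by
  rw [B, rα0]; simp; ring

lemma Bα1 (v : E9) : B v (rootα 1) = v 2 - v 3 := by
  rw [B, rα1]; simp; ring_nf

lemma Bα2 (v : E9) : B v (rootα 2) = v 3 - v 4 := by
  rw [B, rα2]; simp; ring_nf

lemma Bα3 (v : E9) : B v (rootα 3) = v 4 - v 5 := by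
  rw [B, rα3]; simp; ring_nf

lemma Bα4 (v : E9) : B v (rootα 4) = v 5 - v 6 := by
  rw [B, rα4]; simp; ring_nf

lemma Bα5 (v : E9) : B v (rootα 5) = v 6 - v 7 := by
  rw [B, rα5]; simp; ring_nf

lemma Bα6 (v : E9) : B v (rootα 6) = v 7 - v 8 := by
  rw [B, rα6]; simp; ring_nf

lemma Bα7 (v : E9) : B v (rootα 7) = v 8 - v 9 := by
  rw [B, rα7]; simp; ring_nf

lemma Bα8 (v : E9) : B v (rootα 8) = v 8 + v 9 := by
  rw [B, rα8]; simp

lemma sA0 (v : E9) : sLin 0 v = fun a =>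
    if a = 0 then v 0 else
    if a = 1 then v 1 - (v 0 - v 2 - v 3 - v 4 - v 5 - v 6 - v 7 - v 8 + v 9)/4 else
    if a = 9 then v 9 - (v 0 - v 2 - v 3 - v 4 - v 5 - v 6 - v 7 - v 8 + v 9)/4 else
    v a + (v 0 - v 2 - v 3 - v 4 - v 5 - v 6 - v 7 - v 8 + v 9)/4 := by
  funext a; rw [sLin_apply, Pi.sub_apply, Pi.smul_apply, Bα0, rα0]
  fin_cases a <;> simp <;> ring

lemma sA1 (v : E9) : sLin 1 v = fun a => if a = 2 then v 3 else if a = 3 then v 2 else v a := by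
  funext a; rw [sLin_apply, Pi.sub_apply, Pi.smul_apply, Bα1, rα1]
  fin_cases a <;> simp <;> ring

lemma sA2 (v : E9) : sLin 2 v = fun a => if a = 3 then v 4 else if a = 4 then v 3 else v a := by
  funext a; rw [sLin_apply, Pi.sub_apply, Pi.smul_apply, Bα2, rα2]
  fin_cases a <;> simp <;> ring

lemma sA3 (v : E9) : sLin 3 v = fun a => if a = 4 then v 5 else if a = 5 then v 4 else v a := by
  funext a; rw [sLin_apply, Pi.sub_apply, Pi.smul_apply, Bα3, rα3]
  fin_cases a <;> simp <;> ring

lemma sA4 (v : E9) : sLin 4 v = fun a => if a = 5 then v 6 else if a = 6 then v 5 else v a := by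
  funext a; rw [sLin_apply, Pi.sub_apply, Pi.smul_apply, Bα4, rα4]
  fin_cases a <;> simp <;> ring

lemma sA5 (v : E9) : sLin 5 v = fun a => if a = 6 then v 7 else if a = 7 then v 6 else v a := by
  funext a; rw [sLin_apply, Pi.sub_apply, Pi.smul_apply, Bα5, rα5]
  fin_cases a <;> simp <;> ring

lemma sA6 (v : E9) : sLin 6 v = fun a => if a = 7 then v 8 else if a = 8 then v 7 else v a := by
  funext a; rw [sLin_apply, Pi.sub_apply, Pi.smul_apply, Bα6, rα6]
  fin_cases a <;> simp <;> ring

lemma sA7 (v : E9) : sLin 7 v = fun a => if a = 8 then v 9 else if a = 9 then v 8 else v a := by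
  funext a; rw [sLin_apply, Pi.sub_apply, Pi.smul_apply, Bα7, rα7]
  fin_cases a <;> simp <;> ring

lemma sA8 (v : E9) : sLin 8 v = fun a => if a = 8 then -v 9 else if a = 9 then -v 8 else v a := by
  funext a; rw [sLin_apply, Pi.sub_apply, Pi.smul_apply, Bα8, rα8]
  fin_cases a <;> simp <;> ring

end myadd

lemma B_comm (x y : E9) : B x y = B y x := by simp only [B]; ring

lemma B_sub_right (x y z : E9) : B x (y - z) = B x y - B x z := by
  simp only [B, Pi.sub_apply]; ring

lemma B_smul_right (c : ℝ) (x z : E9) : B x (c • z) = c * B x z := by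
  simp only [B, Pi.smul_apply, smul_eq_mul]; ring

lemma B_sLin (i : Fin 9) (v : E9) : B (sLin i v) (sLin i v) = B v v := by
  have h := B_rootα_self i
  have hc := B_comm (rootα i) v
  simp only [sLin_apply, B_sub_left, B_sub_right, B_smul_left, B_smul_right, h, hc]; ring

def Pw (v : E9) : Prop := v 0 = 1 ∧ B v v = 1 ∧ ∃ k m2 m3 m4 m5 m6 m7 m8 m9 m : ℤ,
  v 1 = -(k:ℝ)/2 ∧ v 2 = (m2:ℝ) + (k:ℝ)/2 ∧ v 3 = (m3:ℝ) + (k:ℝ)/2 ∧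
  v 4 = (m4:ℝ) + (k:ℝ)/2 ∧ v 5 = (m5:ℝ) + (k:ℝ)/2 ∧ v 6 = (m6:ℝ) + (k:ℝ)/2 ∧
  v 7 = (m7:ℝ) + (k:ℝ)/2 ∧ v 8 = (m8:ℝ) + (k:ℝ)/2 ∧ v 9 = (m9:ℝ) + (k:ℝ)/2 ∧
  m2+m3+m4+m5+m6+m7+m8+m9 = 2*m + k + 1

lemma Pw_s1 (v : E9) (h : Pw v) : Pw (sLin 1 v) := by
  obtain ⟨h0, hB, k, m2, m3, m4, m5, m6, m7, m8, m9, m, h1, h2, h3, h4, h5, h6, h7, h8, h9, hsum⟩ := h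
  exact ⟨by simp [sA1, h0], (B_sLin 1 v).trans hB, k, m3, m2, m4, m5, m6, m7, m8, m9, m, by simp [sA1, h1], by simp [sA1, h3], by simp [sA1, h2], by simp [sA1, h4], by simp [sA1, h5], by simp [sA1, h6], by simp [sA1, h7], by simp [sA1, h8], by simp [sA1, h9], by omega⟩

lemma Pw_s2 (v : E9) (h : Pw v) : Pw (sLin 2 v) := by
  obtain ⟨h0, hB, k, m2, m3, m4, m5, m6, m7, m8, m9, m, h1, h2, h3, h4, h5, h6, h7, h8, h9, hsum⟩ := h
  exact ⟨by simp [sA2, h0], (B_sLin 2 v).trans hB, k, m2, m4, m3, m5, m6, m7, m8, m9, m, by simp [sA2, h1], by simp [sA2, h2], by simp [sA2, h4], by simp [sA2, h3], by simp [sA2, h5], by simp [sA2, h6], by simp [sA2, h7], by simp [sA2, h8], by simp [sA2, h9], by omega⟩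

lemma Pw_s3 (v : E9) (h : Pw v) : Pw (sLin 3 v) := by
  obtain ⟨h0, hB, k, m2, m3, m4, m5, m6, m7, m8, m9, m, h1, h2, h3, h4, h5, h6, h7, h8, h9, hsum⟩ := h
  exact ⟨by simp [sA3, h0], (B_sLin 3 v).trans hB, k, m2, m3, m5, m4, m6, m7, m8, m9, m, by simp [sA3, h1], by simp [sA3, h2], by simp [sA3, h3], by simp [sA3, h5], by simp [sA3, h4], by simp [sA3, h6], by simp [sA3, h7], by simp [sA3, h8], by simp [sA3, h9], by omega⟩

lemma Pw_s4 (v : E9) (h : Pw v) : Pw (sLin 4 v) := by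
  obtain ⟨h0, hB, k, m2, m3, m4, m5, m6, m7, m8, m9, m, h1, h2, h3, h4, h5, h6, h7, h8, h9, hsum⟩ := h
  exact ⟨by simp [sA4, h0], (B_sLin 4 v).trans hB, k, m2, m3, m4, m6, m5, m7, m8, m9, m, by simp [sA4, h1], by simp [sA4, h2], by simp [sA4, h3], by simp [sA4, h4], by simp [sA4, h6], by simp [sA4, h5], by simp [sA4, h7], by simp [sA4, h8], by simp [sA4, h9], by omega⟩

lemma Pw_s5 (v : E9) (h : Pw v) : Pw (sLin 5 v) := by
  obtain ⟨h0, hB, k, m2, m3, m4, m5, m6, m7, m8, m9, m, h1, h2, h3, h4, h5, h6, h7, h8, h9, hsum⟩ := h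
  exact ⟨by simp [sA5, h0], (B_sLin 5 v).trans hB, k, m2, m3, m4, m5, m7, m6, m8, m9, m, by simp [sA5, h1], by simp [sA5, h2], by simp [sA5, h3], by simp [sA5, h4], by simp [sA5, h5], by simp [sA5, h7], by simp [sA5, h6], by simp [sA5, h8], by simp [sA5, h9], by omega⟩

lemma Pw_s6 (v : E9) (h : Pw v) : Pw (sLin 6 v) := by
  obtain ⟨h0, hB, k, m2, m3, m4, m5, m6, m7, m8, m9, m, h1, h2, h3, h4, h5, h6, h7, h8, h9, hsum⟩ := h
  exact ⟨by simp [sA6, h0], (B_sLin 6 v).trans hB, k, m2, m3, m4, m5, m6, m8, m7, m9, m, by simp [sA6, h1], by simp [sA6, h2], by simp [sA6, h3], by simp [sA6, h4], by simp [sA6, h5], by simp [sA6, h6], by simp [sA6, h8], by simp [sA6, h7], by simp [sA6, h9], by omega⟩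

lemma Pw_s7 (v : E9) (h : Pw v) : Pw (sLin 7 v) := by
  obtain ⟨h0, hB, k, m2, m3, m4, m5, m6, m7, m8, m9, m, h1, h2, h3, h4, h5, h6, h7, h8, h9, hsum⟩ := h
  exact ⟨by simp [sA7, h0], (B_sLin 7 v).trans hB, k, m2, m3, m4, m5, m6, m7, m9, m8, m, by simp [sA7, h1], by simp [sA7, h2], by simp [sA7, h3], by simp [sA7, h4], by simp [sA7, h5], by simp [sA7, h6], by simp [sA7, h7], by simp [sA7, h9], by simp [sA7, h8], by omega⟩

lemma Pw_s8 (v : E9) (h : Pw v) : Pw (sLin 8 v) := by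
  obtain ⟨h0, hB, k, m2, m3, m4, m5, m6, m7, m8, m9, m, h1, h2, h3, h4, h5, h6, h7, h8, h9, hsum⟩ := h
  exact ⟨by simp [sA8, h0], (B_sLin 8 v).trans hB, k, m2, m3, m4, m5, m6, m7, -m9 - k, -m8 - k, m - m8 - m9 - k, by simp [sA8, h1], by simp [sA8, h2], by simp [sA8, h3], by simp [sA8, h4], by simp [sA8, h5], by simp [sA8, h6], by simp [sA8, h7], by simp [sA8, h9]; push_cast; ring, by simp [sA8, h8]; push_cast; ring, by omega⟩

lemma Pw_s0 (v : E9) (h : Pw v) : Pw (sLin 0 v) := by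
  obtain ⟨h0, hB, k, m2, m3, m4, m5, m6, m7, m8, m9, m, h1, h2, h3, h4, h5, h6, h7, h8, h9, hsum⟩ := h
  have hs : (m2:ℝ)+m3+m4+m5+m6+m7+m8+m9 = 2*(m:ℝ)+(k:ℝ)+1 := by exact_mod_cast hsum
  exact ⟨by simp [sA0, h0], (B_sLin 0 v).trans hB, k + (m9 - m - 2*k), m2, m3, m4, m5, m6, m7, m8, m9 - (m9 - m - 2*k), m - (m9 - m - 2*k), by simp [sA0, h0, h1, h2, h3, h4, h5, h6, h7, h8, h9]; push_cast; linarith [hs], by simp [sA0, h0, h1, h2, h3, h4, h5, h6, h7, h8, h9]; push_cast; linarith [hs], by simp [sA0, h0, h1, h2, h3, h4, h5, h6, h7, h8, h9]; push_cast; linarith [hs], by simp [sA0, h0, h1, h2, h3, h4, h5, h6, h7, h8, h9]; push_cast; linarith [hs], by simp [sA0, h0, h1, h2, h3, h4, h5, h6, h7, h8, h9]; push_cast; linarith [hs], by simp [sA0, h0, h1, h2, h3, h4, h5, h6, h7, h8, h9]; push_cast; linarith [hs], by simp [sA0, h0, h1, h2, h3, h4, h5, h6, h7, h8, h9]; push_cast;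 linarith [hs], by simp [sA0, h0, h1, h2, h3, h4, h5, h6, h7, h8, h9]; push_cast; linarith [hs], by simp [sA0, h0, h1, h2, h3, h4, h5, h6, h7, h8, h9]; push_cast; linarith [hs], by omega⟩

lemma Pw_s (i : Fin 9) (v : E9) (h : Pw v) : Pw (sLin i v) := by
  fin_cases i
  · exact Pw_s0 v h
  · exact Pw_s1 v h
  · exact Pw_s2 v h
  · exact Pw_s3 v h
  · exact Pw_s4 v h
  · exact Pw_s5 v h
  · exact Pw_s6 v h
  · exact Pw_s7 v h
  · exact Pw_s8 v h

lemma sLin_sLin (i : Fin 9) (v : E9) : sLin i (sLin i v) = v := by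
  have := LinearMap.congr_fun (sLin_invol i) v
  simpa using this

lemma mem_W_pw {g : LinearMap.GeneralLinearGroup ℝ E9} (hg : g ∈ W) :
    ∀ v : E9, Pw ((g : E9 →ₗ[ℝ] E9) v) ↔ Pw v := by
  refine Subgroup.closure_induction ?_ ?_ ?_ ?_ hg
  · rintro x ⟨i, rfl⟩ v
    constructor
    · intro h
      have h2 := Pw_s i _ h
      rwa [show (((sGL i : LinearMap.GeneralLinearGroup ℝ E9) : E9 →ₗ[ℝ] E9) v) = sLin i v from rfl,
        sLin_sLin] at h2
    · exact Pw_s i v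
  · intro v; simp
  · intro x y hx hy hhx hhy v
    rw [Units.val_mul, Module.End.mul_apply]
    exact (hhx _).trans (hhy v)
  · intro x hx hhx v
    have h1 := hhx (((x⁻¹ : LinearMap.GeneralLinearGroup ℝ E9) : E9 →ₗ[ℝ] E9) v)
    have h2 : ((x : LinearMap.GeneralLinearGroup ℝ E9) : E9 →ₗ[ℝ] E9)
        (((x⁻¹ : LinearMap.GeneralLinearGroup ℝ E9) : E9 →ₗ[ℝ] E9) v) = v := by
      rw [← Module.End.mul_apply, ← Units.val_mul, mul_inv_cancel]
      simp
    rw [h2] at h1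
    exact h1.symm.trans (Iff.rfl)

lemma Λ1F : Λw 1 = fun a => if a = 0 then 1 else if a = 2 then 1 else 0 := by
  funext a; fin_cases a <;> simp [Λw, e0, epsV, Pi.add_apply]

lemma Pw_Λ1 : Pw (Λw 1) := by
  refine ⟨by simp [Λ1F], by rw [B, Λ1F]; simp, 0, 1, 0, 0, 0, 0, 0, 0, 0, 0, ?_, ?_, ?_, ?_, ?_, ?_, ?_, ?_, ?_, by ring⟩ <;>
    simp [Λ1F]

lemma orbit_Pw {w : E9} (hw : w ∈ WeylOrbit) : Pw w := by
  obtain ⟨g, hg, rfl⟩ := hw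
  exact (mem_W_pw hg (Λw 1)).mpr Pw_Λ1


def idxF (i : Fin 8) : Fin 10 := ⟨(i:ℕ)+2, by omega⟩

@[simp] lemma idxF0 : idxF 0 = 2 := rfl
@[simp] lemma idxF1 : idxF 1 = 3 := rfl
@[simp] lemma idxF2 : idxF 2 = 4 := rfl
@[simp] lemma idxF3 : idxF 3 = 5 := rfl
@[simp] lemma idxF4 : idxF 4 = 6 := rfl
@[simp] lemma idxF5 : idxF 5 = 7 := rfl
@[simp] lemma idxF6 : idxF 6 = 8 := rfl
@[simp] lemma idxF7 : idxF 7 = 9 := rfl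

@[simp] lemma idxF_inj {p q : Fin 8} : idxF p = idxF q ↔ p = q := by
  constructor
  · intro h
    have h2 : (p:ℕ)+2 = (q:ℕ)+2 := congrArg Fin.val h
    exact Fin.ext (by omega)
  · rintro rfl; rfl

@[simp] lemma zero_ne_idxF (q : Fin 8) : ((0 : Fin 10) = idxF q) ↔ False := by
  simp only [iff_false]
  intro h
  have h2 : (0:ℕ) = (q:ℕ)+2 := congrArg Fin.val h
  omega

@[simp] lemma one_ne_idxF (q : Fin 8) : ((1 : Fin 10) = idxF q) ↔ False := by
  simp only [iff_false]
  intro h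
  have h2 : (1:ℕ) = (q:ℕ)+2 := congrArg Fin.val h
  omega

def sT (T : Finset (Fin 8)) : Fin 8 → ℝ := fun i => if i ∈ T then -1 else 1

def vT (T : Finset (Fin 8)) : E9 :=
  e0 - (1/2 : ℝ) • deltaV + (1/2 : ℝ) • ∑ i, sT T i • epsV i

lemma vT_0 (T : Finset (Fin 8)) : vT T 0 = 1 := by
  simp [vT, e0, deltaV, epsV, Fin.sum_univ_eight, Pi.add_apply, Pi.sub_apply, Pi.smul_apply]

lemma vT_1 (T : Finset (Fin 8)) : vT T 1 = -(1/2 : ℝ) := by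
  simp [vT, e0, deltaV, epsV, Fin.sum_univ_eight, Pi.add_apply, Pi.sub_apply, Pi.smul_apply]

lemma vT_c (T : Finset (Fin 8)) (i : Fin 8) : vT T (idxF i) = (1/2) * sT T i := by
  fin_cases i <;>
    simp [vT, e0, deltaV, epsV, Fin.sum_univ_eight, Pi.add_apply, Pi.sub_apply, Pi.smul_apply] <;>
    try ring

def flip2 (i j : Fin 8) (v : E9) : E9 := fun a => if a = idxF i ∨ a = idxF j then -v a else v a

lemma flip2_comm (i j : Fin 8) (v : E9) : flip2 i j v = flip2 j i v := by
  funext a; simp [flip2, or_comm]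

lemma flip2_flip2 (i j k : Fin 8) (hij : i ≠ j) (hik : i ≠ k) (hjk : j ≠ k) (v : E9) :
    flip2 j k (flip2 i j v) = flip2 i k v := by
  funext a
  by_cases h1 : a = idxF i <;> by_cases h2 : a = idxF j <;> by_cases h3 : a = idxF k <;>
    simp_all [flip2] <;> simp_all [idxF_inj]

lemma sGL_mem (i : Fin 9) : sGL i ∈ W := Subgroup.subset_closure ⟨i, rfl⟩

lemma flipL6 : ∃ g ∈ W, ∀ v : E9, (g : E9 →ₗ[ℝ] E9) v = flip2 6 7 v := by
  refine ⟨sGL 8 * sGL 7, mul_mem (sGL_mem 8) (sGL_mem 7), fun v => ?_⟩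
  have h : ((sGL 8 * sGL 7 : LinearMap.GeneralLinearGroup ℝ E9) : E9 →ₗ[ℝ] E9) v
      = sLin 8 (sLin 7 v) := rfl
  rw [h]
  funext a; fin_cases a <;> simp [sA7, sA8, flip2]

lemma flipL5 : ∃ g ∈ W, ∀ v : E9, (g : E9 →ₗ[ℝ] E9) v = flip2 5 6 v := by
  obtain ⟨g, hg, ha⟩ := flipL6
  refine ⟨sGL 7 * sGL 6 * g * sGL 6 * sGL 7,
    mul_mem (mul_mem (mul_mem (mul_mem (sGL_mem _) (sGL_mem _)) hg) (sGL_mem _)) (sGL_mem _),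
    fun v => ?_⟩
  have h : ((sGL 7 * sGL 6 * g * sGL 6 * sGL 7 :
      LinearMap.GeneralLinearGroup ℝ E9) : E9 →ₗ[ℝ] E9) v
      = sLin 7 (sLin 6 ((g : E9 →ₗ[ℝ] E9) (sLin 6 (sLin 7 v)))) := rfl
  rw [h, ha]
  funext a; fin_cases a <;> simp [sA6, sA7, flip2]

lemma flipL4 : ∃ g ∈ W, ∀ v : E9, (g : E9 →ₗ[ℝ] E9) v = flip2 4 5 v := by
  obtain ⟨g, hg, ha⟩ := flipL5
  refine ⟨sGL 6 * sGL 5 * g * sGL 5 * sGL 6,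
    mul_mem (mul_mem (mul_mem (mul_mem (sGL_mem _) (sGL_mem _)) hg) (sGL_mem _)) (sGL_mem _),
    fun v => ?_⟩
  have h : ((sGL 6 * sGL 5 * g * sGL 5 * sGL 6 :
      LinearMap.GeneralLinearGroup ℝ E9) : E9 →ₗ[ℝ] E9) v
      = sLin 6 (sLin 5 ((g : E9 →ₗ[ℝ] E9) (sLin 5 (sLin 6 v)))) := rfl
  rw [h, ha]
  funext a; fin_cases a <;> simp [sA5, sA6, flip2]

lemma flipL3 : ∃ g ∈ W, ∀ v : E9, (g : E9 →ₗ[ℝ] E9) v = flip2 3 4 v := by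
  obtain ⟨g, hg, ha⟩ := flipL4
  refine ⟨sGL 5 * sGL 4 * g * sGL 4 * sGL 5,
    mul_mem (mul_mem (mul_mem (mul_mem (sGL_mem _) (sGL_mem _)) hg) (sGL_mem _)) (sGL_mem _),
    fun v => ?_⟩
  have h : ((sGL 5 * sGL 4 * g * sGL 4 * sGL 5 :
      LinearMap.GeneralLinearGroup ℝ E9) : E9 →ₗ[ℝ] E9) v
      = sLin 5 (sLin 4 ((g : E9 →ₗ[ℝ] E9) (sLin 4 (sLin 5 v)))) := rfl
  rw [h, ha]
  funext a; fin_cases a <;> simp [sA4, sA5, flip2]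

lemma flipL2 : ∃ g ∈ W, ∀ v : E9, (g : E9 →ₗ[ℝ] E9) v = flip2 2 3 v := by
  obtain ⟨g, hg, ha⟩ := flipL3
  refine ⟨sGL 4 * sGL 3 * g * sGL 3 * sGL 4,
    mul_mem (mul_mem (mul_mem (mul_mem (sGL_mem _) (sGL_mem _)) hg) (sGL_mem _)) (sGL_mem _),
    fun v => ?_⟩
  have h : ((sGL 4 * sGL 3 * g * sGL 3 * sGL 4 :
      LinearMap.GeneralLinearGroup ℝ E9) : E9 →ₗ[ℝ] E9) v
      = sLin 4 (sLin 3 ((g : E9 →ₗ[ℝ] E9) (sLin 3 (sLin 4 v)))) := rfl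
  rw [h, ha]
  funext a; fin_cases a <;> simp [sA3, sA4, flip2]

lemma flipL1 : ∃ g ∈ W, ∀ v : E9, (g : E9 →ₗ[ℝ] E9) v = flip2 1 2 v := by
  obtain ⟨g, hg, ha⟩ := flipL2
  refine ⟨sGL 3 * sGL 2 * g * sGL 2 * sGL 3,
    mul_mem (mul_mem (mul_mem (mul_mem (sGL_mem _) (sGL_mem _)) hg) (sGL_mem _)) (sGL_mem _),
    fun v => ?_⟩
  have h : ((sGL 3 * sGL 2 * g * sGL 2 * sGL 3 :
      LinearMap.GeneralLinearGroup ℝ E9) : E9 →ₗ[ℝ] E9) v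
      = sLin 3 (sLin 2 ((g : E9 →ₗ[ℝ] E9) (sLin 2 (sLin 3 v)))) := rfl
  rw [h, ha]
  funext a; fin_cases a <;> simp [sA2, sA3, flip2]

lemma flipL0 : ∃ g ∈ W, ∀ v : E9, (g : E9 →ₗ[ℝ] E9) v = flip2 0 1 v := by
  obtain ⟨g, hg, ha⟩ := flipL1
  refine ⟨sGL 2 * sGL 1 * g * sGL 1 * sGL 2,
    mul_mem (mul_mem (mul_mem (mul_mem (sGL_mem _) (sGL_mem _)) hg) (sGL_mem _)) (sGL_mem _),
    fun v => ?_⟩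
  have h : ((sGL 2 * sGL 1 * g * sGL 1 * sGL 2 :
      LinearMap.GeneralLinearGroup ℝ E9) : E9 →ₗ[ℝ] E9) v
      = sLin 2 (sLin 1 ((g : E9 →ₗ[ℝ] E9) (sLin 1 (sLin 2 v)))) := rfl
  rw [h, ha]
  funext a; fin_cases a <;> simp [sA1, sA2, flip2]

lemma exists_flip_adj (i : Fin 8) (h : (i:ℕ) < 7) :
    ∃ g ∈ W, ∀ v : E9, (g : E9 →ₗ[ℝ] E9) v = flip2 i ⟨(i:ℕ)+1, by omega⟩ v := by
  fin_cases i
  · exact flipL0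
  · exact flipL1
  · exact flipL2
  · exact flipL3
  · exact flipL4
  · exact flipL5
  · exact flipL6
  · simp at h


lemma exists_flip2_aux : ∀ (n : ℕ) (i j : Fin 8), (j:ℕ) = (i:ℕ) + n + 1 →
    ∃ g ∈ W, ∀ v : E9, (g : E9 →ₗ[ℝ] E9) v = flip2 i j v := by
  intro n
  induction n with
  | zero =>
    intro i j hj
    have hj8 : (j:ℕ) < 8 := j.isLt
    have h7 : (i:ℕ) < 7 := by omega
    have hjj : j = ⟨(i:ℕ)+1, by omega⟩ := Fin.ext (by simpa using hj)
    rw [hjj]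
    exact exists_flip_adj i h7
  | succ n ih =>
    intro i j hj
    have hj8 : (j:ℕ) < 8 := j.isLt
    set j' : Fin 8 := ⟨(i:ℕ)+n+1, by omega⟩ with hj'
    obtain ⟨g1, hg1, ha1⟩ := ih i j' rfl
    have h7 : (j':ℕ) < 7 := by simp [hj']; omega
    obtain ⟨g2, hg2, ha2⟩ := exists_flip_adj j' h7
    have hjeq : (⟨(j':ℕ)+1, by omega⟩ : Fin 8) = j := Fin.ext (by simp [hj']; omega)
    refine ⟨g2 * g1, mul_mem hg2 hg1, fun v => ?_⟩
    have h : ((g2 * g1 : LinearMap.GeneralLinearGroup ℝ E9) : E9 →ₗ[ℝ] E9) v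
        = (g2 : E9 →ₗ[ℝ] E9) ((g1 : E9 →ₗ[ℝ] E9) v) := rfl
    have hii : i ≠ j' := by
      intro hcon
      have := congrArg Fin.val hcon
      simp only [hj'] at this
      omega
    have hij : i ≠ j := by
      intro hcon
      have := congrArg Fin.val hcon
      omega
    have hjj : j' ≠ j := by
      intro hcon
      have := congrArg Fin.val hcon
      simp [hj'] at this
      omega
    rw [h, ha1, ha2, hjeq]
    exact flip2_flip2 i j' j hii hij hjj v

lemma exists_flip2 (i j : Fin 8) (hne : i ≠ j) :
    ∃ g ∈ W, ∀ v : E9, (g : E9 →ₗ[ℝ] E9) v = flip2 i j v := by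
  rcases Nat.lt_or_ge (i:ℕ) (j:ℕ) with hlt | hge
  · exact exists_flip2_aux ((j:ℕ) - (i:ℕ) - 1) i j (by omega)
  · have hlt : (j:ℕ) < (i:ℕ) := by
      rcases Nat.lt_or_ge (j:ℕ) (i:ℕ) with h | h
      · exact h
      · exact absurd (Fin.ext (by omega)) hne
    obtain ⟨g, hg, ha⟩ := exists_flip2_aux ((i:ℕ) - (j:ℕ) - 1) j i (by omega)
    exact ⟨g, hg, fun v => (ha v).trans (flip2_comm j i v)⟩

lemma fin10_cl (a : Fin 10) : a = 0 ∨ a = 1 ∨ ∃ q : Fin 8, a = idxF q := by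
  fin_cases a
  exacts [Or.inl rfl, Or.inr (Or.inl rfl), Or.inr (Or.inr ⟨0, rfl⟩), Or.inr (Or.inr ⟨1, rfl⟩),
    Or.inr (Or.inr ⟨2, rfl⟩), Or.inr (Or.inr ⟨3, rfl⟩), Or.inr (Or.inr ⟨4, rfl⟩),
    Or.inr (Or.inr ⟨5, rfl⟩), Or.inr (Or.inr ⟨6, rfl⟩), Or.inr (Or.inr ⟨7, rfl⟩)]

lemma flip_vT (T : Finset (Fin 8)) (i j : Fin 8) (hi : i ∉ T) (hj : j ∉ T) (hij : i ≠ j) :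
    flip2 i j (vT T) = vT (insert i (insert j T)) := by
  funext a
  rcases fin10_cl a with rfl | rfl | ⟨q, rfl⟩
  · simp [flip2, vT_0]
  · simp [flip2, vT_1]
  · by_cases hq : q = i
    · subst hq
      rw [flip2]
      rw [if_pos (Or.inl rfl)]
      rw [vT_c, vT_c]
      simp [sT, hi, Finset.mem_insert]
    · by_cases hq2 : q = j
      · subst hq2
        rw [flip2]
        rw [if_pos (Or.inr rfl)]
        rw [vT_c, vT_c]
        simp [sT, hj, Finset.mem_insert, hij, Ne.symm hij, hq]
      · rw [flip2]
        rw [if_neg (by simp [hq, hq2])]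
        rw [vT_c, vT_c]
        simp [sT, Finset.mem_insert, hq, hq2]

lemma vT_empty_F : vT ∅ = fun a => if a = 0 then 1 else if a = 1 then -(1/2 : ℝ) else 1/2 := by
  funext a
  fin_cases a <;>
    simp [vT, sT, e0, deltaV, epsV, Fin.sum_univ_eight, Pi.add_apply, Pi.sub_apply,
      Pi.smul_apply] <;> norm_num

lemma vT_empty_mem : vT ∅ ∈ WeylOrbit := by
  refine ⟨sGL 0 * sGL 7 * sGL 6 * sGL 5 * sGL 4 * sGL 3 * sGL 2 * sGL 1,
    mul_mem (mul_mem (mul_mem (mul_mem (mul_mem (mul_mem (mul_mem (sGL_mem _) (sGL_mem _))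
      (sGL_mem _)) (sGL_mem _)) (sGL_mem _)) (sGL_mem _)) (sGL_mem _)) (sGL_mem _), ?_⟩
  have h : ((sGL 0 * sGL 7 * sGL 6 * sGL 5 * sGL 4 * sGL 3 * sGL 2 * sGL 1 :
      LinearMap.GeneralLinearGroup ℝ E9) : E9 →ₗ[ℝ] E9) (Λw 1)
      = sLin 0 (sLin 7 (sLin 6 (sLin 5 (sLin 4 (sLin 3 (sLin 2 (sLin 1 (Λw 1)))))))) := rfl
  rw [h, Λ1F, vT_empty_F]
  funext a
  fin_cases a <;> simp [sA0, sA1, sA2, sA3, sA4, sA5, sA6, sA7] <;> norm_num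

lemma vT_mem : ∀ (n : ℕ) (T : Finset (Fin 8)), T.card = n → Even n → vT T ∈ WeylOrbit := by
  intro n
  induction n using Nat.strong_induction_on with
  | _ n ih =>
    intro T hcard heven
    rcases Nat.eq_zero_or_pos n with hz | hpos
    · subst hz
      rw [Finset.card_eq_zero.mp hcard]
      exact vT_empty_mem
    · obtain ⟨r, hr⟩ := heven
      have h2 : 2 ≤ n := by omega
      obtain ⟨i, hi⟩ := Finset.card_pos.mp (by omega : 0 < T.card)
      have hce : (T.erase i).card = n - 1 := by rw [Finset.card_erase_of_mem hi, hcard]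
      obtain ⟨j, hj⟩ := Finset.card_pos.mp (by omega : 0 < (T.erase i).card)
      have hji : j ≠ i := (Finset.mem_erase.mp hj).1
      have hcard2 : ((T.erase i).erase j).card = n - 2 := by
        rw [Finset.card_erase_of_mem hj, hce]
        omega
      have hmem := ih (n-2) (by omega) ((T.erase i).erase j) hcard2 ⟨r-1, by omega⟩
      have hiT2 : i ∉ (T.erase i).erase j := by
        intro hmem2
        exact (Finset.notMem_erase i T) (Finset.mem_erase.mp hmem2).2
      have hjT2 : j ∉ (T.erase i).erase j := Finset.notMem_erase j _
      have hins : insert i (insert j ((T.erase i).erase j)) = T := by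
        rw [Finset.insert_erase hj, Finset.insert_erase hi]
      obtain ⟨g, hg, hga⟩ := exists_flip2 i j (Ne.symm hji)
      obtain ⟨h0, hh0, hv⟩ := hmem
      refine ⟨g * h0, mul_mem hg hh0, ?_⟩
      have hcoe : ((g * h0 : LinearMap.GeneralLinearGroup ℝ E9) : E9 →ₗ[ℝ] E9) (Λw 1)
          = (g : E9 →ₗ[ℝ] E9) ((h0 : E9 →ₗ[ℝ] E9) (Λw 1)) := rfl
      rw [hcoe, hv, hga, flip_vT _ i j hiT2 hjT2 (Ne.symm hji), hins]


lemma int_mm (m : ℤ) : 0 ≤ m * m + m := by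
  rcases le_or_gt 0 m with h | h <;> nlinarith

lemma Pw_half {v : E9} (h : Pw v) (hhalf : v 1 = -(1/2 : ℝ)) : v ∈ TypeII := by
  obtain ⟨h0, hB, k, m2, m3, m4, m5, m6, m7, m8, m9, m, h1, h2, h3, h4, h5, h6, h7, h8, h9, hsum⟩ := h
  have hkr : (k:ℝ) = 1 := by
    have hh : -(k:ℝ)/2 = -(1/2 : ℝ) := h1.symm.trans hhalf
    linarith
  have hk : k = 1 := by exact_mod_cast hkr
  subst hk
  rw [B] at hB
  rw [h0, h1, h2, h3, h4, h5, h6, h7, h8, h9] at hB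
  have hZ : m2*m2+m2 + (m3*m3+m3) + (m4*m4+m4) + (m5*m5+m5) + (m6*m6+m6) + (m7*m7+m7)
      + (m8*m8+m8) + (m9*m9+m9) = 0 := by
    have hr : ((m2*m2+m2 + (m3*m3+m3) + (m4*m4+m4) + (m5*m5+m5) + (m6*m6+m6) + (m7*m7+m7)
      + (m8*m8+m8) + (m9*m9+m9) : ℤ) : ℝ) = 0 := by
      push_cast
      push_cast at hB
      linear_combination hB
    exact_mod_cast hr
  have d2 : m2 = 0 ∨ m2 = -1 := by
    have e' : m2*m2+m2 = 0 := le_antisymm (by linarith [int_mm m3, int_mm m4, int_mm m5, int_mm m6, int_mm m7, int_mm m8, int_mm m9]) (int_mm m2)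
    have e : m2 * (m2+1) = 0 := by linear_combination e'
    rcases mul_eq_zero.mp e with hh | hh
    · exact Or.inl hh
    · exact Or.inr (by omega)
  have d3 : m3 = 0 ∨ m3 = -1 := by
    have e' : m3*m3+m3 = 0 := le_antisymm (by linarith [int_mm m2, int_mm m4, int_mm m5, int_mm m6, int_mm m7, int_mm m8, int_mm m9]) (int_mm m3)
    have e : m3 * (m3+1) = 0 := by linear_combination e'
    rcases mul_eq_zero.mp e with hh | hh
    · exact Or.inl hh
    · exact Or.inr (by omega)
  have d4 : m4 = 0 ∨ m4 = -1 := by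
    have e' : m4*m4+m4 = 0 := le_antisymm (by linarith [int_mm m2, int_mm m3, int_mm m5, int_mm m6, int_mm m7, int_mm m8, int_mm m9]) (int_mm m4)
    have e : m4 * (m4+1) = 0 := by linear_combination e'
    rcases mul_eq_zero.mp e with hh | hh
    · exact Or.inl hh
    · exact Or.inr (by omega)
  have d5 : m5 = 0 ∨ m5 = -1 := by
    have e' : m5*m5+m5 = 0 := le_antisymm (by linarith [int_mm m2, int_mm m3, int_mm m4, int_mm m6, int_mm m7, int_mm m8, int_mm m9]) (int_mm m5)
    have e : m5 * (m5+1) = 0 := by linear_combination e'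
    rcases mul_eq_zero.mp e with hh | hh
    · exact Or.inl hh
    · exact Or.inr (by omega)
  have d6 : m6 = 0 ∨ m6 = -1 := by
    have e' : m6*m6+m6 = 0 := le_antisymm (by linarith [int_mm m2, int_mm m3, int_mm m4, int_mm m5, int_mm m7, int_mm m8, int_mm m9]) (int_mm m6)
    have e : m6 * (m6+1) = 0 := by linear_combination e'
    rcases mul_eq_zero.mp e with hh | hh
    · exact Or.inl hh
    · exact Or.inr (by omega)
  have d7 : m7 = 0 ∨ m7 = -1 := by
    have e' : m7*m7+m7 = 0 := le_antisymm (by linarith [int_mm m2, int_mm m3, int_mm m4, int_mm m5, int_mm m6, int_mm m8, int_mm m9]) (int_mm m7)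
    have e : m7 * (m7+1) = 0 := by linear_combination e'
    rcases mul_eq_zero.mp e with hh | hh
    · exact Or.inl hh
    · exact Or.inr (by omega)
  have d8 : m8 = 0 ∨ m8 = -1 := by
    have e' : m8*m8+m8 = 0 := le_antisymm (by linarith [int_mm m2, int_mm m3, int_mm m4, int_mm m5, int_mm m6, int_mm m7, int_mm m9]) (int_mm m8)
    have e : m8 * (m8+1) = 0 := by linear_combination e'
    rcases mul_eq_zero.mp e with hh | hh
    · exact Or.inl hh
    · exact Or.inr (by omega)
  have d9 : m9 = 0 ∨ m9 = -1 := by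
    have e' : m9*m9+m9 = 0 := le_antisymm (by linarith [int_mm m2, int_mm m3, int_mm m4, int_mm m5, int_mm m6, int_mm m7, int_mm m8]) (int_mm m9)
    have e : m9 * (m9+1) = 0 := by linear_combination e'
    rcases mul_eq_zero.mp e with hh | hh
    · exact Or.inl hh
    · exact Or.inr (by omega)
  have e2' : (if (2 * v 2 = (-1:ℝ)) then (1:ℤ) else 0) = -m2 := by
    rcases d2 with hc | hc <;> rw [hc] at h2 <;> rw [h2] <;> norm_num <;> omega
  have e3' : (if (2 * v 3 = (-1:ℝ)) then (1:ℤ) else 0) = -m3 := by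
    rcases d3 with hc | hc <;> rw [hc] at h3 <;> rw [h3] <;> norm_num <;> omega
  have e4' : (if (2 * v 4 = (-1:ℝ)) then (1:ℤ) else 0) = -m4 := by
    rcases d4 with hc | hc <;> rw [hc] at h4 <;> rw [h4] <;> norm_num <;> omega
  have e5' : (if (2 * v 5 = (-1:ℝ)) then (1:ℤ) else 0) = -m5 := by
    rcases d5 with hc | hc <;> rw [hc] at h5 <;> rw [h5] <;> norm_num <;> omega
  have e6' : (if (2 * v 6 = (-1:ℝ)) then (1:ℤ) else 0) = -m6 := by
    rcases d6 with hc | hc <;> rw [hc] at h6 <;> rw [h6] <;> norm_num <;> omega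
  have e7' : (if (2 * v 7 = (-1:ℝ)) then (1:ℤ) else 0) = -m7 := by
    rcases d7 with hc | hc <;> rw [hc] at h7 <;> rw [h7] <;> norm_num <;> omega
  have e8' : (if (2 * v 8 = (-1:ℝ)) then (1:ℤ) else 0) = -m8 := by
    rcases d8 with hc | hc <;> rw [hc] at h8 <;> rw [h8] <;> norm_num <;> omega
  have e9' : (if (2 * v 9 = (-1:ℝ)) then (1:ℤ) else 0) = -m9 := by
    rcases d9 with hc | hc <;> rw [hc] at h9 <;> rw [h9] <;> norm_num <;> omega
  refine ⟨fun i => 2 * v (idxF i), ?_, ?_, ?_⟩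
  · intro i
    fin_cases i
    · rcases d2 with hc | hc
      · left; show (2:ℝ) * v 2 = 1; rw [h2, hc]; norm_num
      · right; show (2:ℝ) * v 2 = -1; rw [h2, hc]; norm_num
    · rcases d3 with hc | hc
      · left; show (2:ℝ) * v 3 = 1; rw [h3, hc]; norm_num
      · right; show (2:ℝ) * v 3 = -1; rw [h3, hc]; norm_num
    · rcases d4 with hc | hc
      · left; show (2:ℝ) * v 4 = 1; rw [h4, hc]; norm_num
      · right; show (2:ℝ) * v 4 = -1; rw [h4, hc]; norm_num
    · rcases d5 with hc | hc
      · left; show (2:ℝ) * v 5 = 1; rw [h5, hc]; norm_num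
      · right; show (2:ℝ) * v 5 = -1; rw [h5, hc]; norm_num
    · rcases d6 with hc | hc
      · left; show (2:ℝ) * v 6 = 1; rw [h6, hc]; norm_num
      · right; show (2:ℝ) * v 6 = -1; rw [h6, hc]; norm_num
    · rcases d7 with hc | hc
      · left; show (2:ℝ) * v 7 = 1; rw [h7, hc]; norm_num
      · right; show (2:ℝ) * v 7 = -1; rw [h7, hc]; norm_num
    · rcases d8 with hc | hc
      · left; show (2:ℝ) * v 8 = 1; rw [h8, hc]; norm_num
      · right; show (2:ℝ) * v 8 = -1; rw [h8, hc]; norm_num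
    · rcases d9 with hc | hc
      · left; show (2:ℝ) * v 9 = 1; rw [h9, hc]; norm_num
      · right; show (2:ℝ) * v 9 = -1; rw [h9, hc]; norm_num
  · have hcast : ((Finset.univ.filter fun i => 2 * v (idxF i) = (-1:ℝ)).card : ℤ)
        = -(m2+m3+m4+m5+m6+m7+m8+m9) := by
      rw [Finset.card_filter]
      push_cast [apply_ite (Nat.cast : ℕ → ℤ)]
      rw [Fin.sum_univ_eight]
      rw [← idxF0] at e2'; rw [← idxF1] at e3'; rw [← idxF2] at e4'; rw [← idxF3] at e5'; rw [← idxF4] at e6'; rw [← idxF5] at e7'; rw [← idxF6] at e8'; rw [← idxF7] at e9'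
      rw [e2', e3', e4', e5', e6', e7', e8', e9']
      ring
    have hev : Even (((Finset.univ.filter fun i => 2 * v (idxF i) = (-1:ℝ)).card : ℤ)) := by
      rw [hcast]
      exact ⟨-m-1, by omega⟩
    exact (Int.even_coe_nat _).mp hev
  · funext a
    rcases fin10_cl a with rfl | rfl | ⟨q, rfl⟩
    · rw [h0]
      simp [e0, deltaV, epsV, Fin.sum_univ_eight, Pi.add_apply, Pi.sub_apply, Pi.smul_apply]
    · rw [hhalf]
      simp [e0, deltaV, epsV, Fin.sum_univ_eight, Pi.add_apply, Pi.sub_apply, Pi.smul_apply]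
    · fin_cases q <;>
        simp [e0, deltaV, epsV, Fin.sum_univ_eight, Pi.add_apply, Pi.sub_apply,
          Pi.smul_apply] <;> ring

lemma vT_injective : Function.Injective vT := by
  intro T T' h
  refine Finset.ext fun q => ⟨fun hq => ?_, fun hq => ?_⟩ <;> by_contra hq'
  · have hc := congrFun h (idxF q)
    rw [vT_c, vT_c] at hc
    simp only [sT] at hc
    rw [if_pos hq, if_neg hq'] at hc
    norm_num at hc
  · have hc := congrFun h (idxF q)
    rw [vT_c, vT_c] at hc
    simp only [sT] at hc
    rw [if_neg hq', if_pos hq] at hc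
    norm_num at hc

lemma TypeII_eq_image : TypeII = vT '' {T | Even T.card} := by
  ext v
  constructor
  · rintro ⟨s, hs, hev, rfl⟩
    refine ⟨Finset.univ.filter (fun i => s i = -1), hev, ?_⟩
    unfold vT
    congr 1
    refine congrArg _ (Finset.sum_congr rfl fun i _ => ?_)
    rcases hs i with hh | hh <;> norm_num [sT, hh]
  · rintro ⟨T, hev, rfl⟩
    refine ⟨sT T, fun i => ?_, ?_, rfl⟩
    · by_cases hh : i ∈ T
      · exact Or.inr (by simp [sT, hh])
      · exact Or.inl (by simp [sT, hh])
    · have hfe : Finset.univ.filter (fun i => sT T i = -1) = T := by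
        ext i
        by_cases hh : i ∈ T <;> norm_num [sT, hh]
      rw [hfe]
      exact hev

set_option maxRecDepth 100000 in
lemma evenCard_count :
    (Finset.univ.filter fun T : Finset (Fin 8) => Even T.card).card = 128 := by decide

/-- The elements of the Weyl group orbit `W·Λ₁` whose `δ`-coordinate is
`-½` are exactly the 128 type II vectors `½(2, -1; ±1, …, ±1)` having an even number
of minus signs among the last eight coordinates. -/
theorem orbit_delta_neg_half_eq_typeII :
    {w : E9 | w ∈ WeylOrbit ∧ w 1 = -(1 / 2 : ℝ)} = TypeII ∧ TypeII.ncard = 128 := by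
  constructor
  · ext w
    simp only [Set.mem_setOf_eq]
    constructor
    · rintro ⟨hw, h1⟩
      exact Pw_half (orbit_Pw hw) h1
    · intro hw
      rw [TypeII_eq_image] at hw
      obtain ⟨T, hev, rfl⟩ := hw
      exact ⟨vT_mem T.card T rfl hev, vT_1 T⟩
  · rw [TypeII_eq_image, Set.ncard_image_of_injective _ vT_injective]
    have hset : {T : Finset (Fin 8) | Even T.card}
        = ↑(Finset.univ.filter fun T : Finset (Fin 8) => Even T.card) := by
      ext T; simp
    rw [hset, Set.ncard_coe_finset]
    exact evenCard_count

end
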